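/- (Path coupling.) Let (P, Ω, π) be a finite-state, irreducible, aperiodic Markov chain with stationary distribution π, Φ a metric on Ω with D = D_max/D_min as above, and S ⊆ Ω×Ω a set of pairs such that for all x,y ∈ Ω there exists a path x = z_0, z_1, …, z_r = y with (z_l, z_{l+1}) ∈ S for 0 ≤ l < r and Φ(x,y) = Σ_{l=0}^{r−1} Φ(z_l, z_{l+1}). Suppose (X(t),Y(t)) is a coupling of the chain with Y(t) stationary, and there exists β < 1 such that the contraction condition E[Φ(X(t+1),Y(t+1)) | X(t)=x, Y(t)=y] ≤ β Φ(x,y) holds for every pair (x,y) ∈ S. Then ||μ_t − π||_var ≤ min{1, β^t D} for the distribution μ_t of X(t), and T_mix ≤ ⌈log(De)/log(β^{-1})⌉ ≤ ⌈log(De)/(1−β)⌉. -/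

import Mathlib

open Finset

/-- Distribution at time `t` of a Markov chain with transition matrix `P`
started at state `x`. -/
noncomputable def chainDist {S : Type*} [Fintype S] [DecidableEq S]
    (P : S → S → ℝ) (x : S) : ℕ → S → ℝ
  | 0 => fun s => if s = x then 1 else 0
  | t + 1 => fun s => ∑ s' : S, chainDist P x t s' * P s' s

/-- `t`-step transition probabilities. -/
noncomputable def chainPow {S : Type*} [Fintype S] [DecidableEq S]
    (P : S → S → ℝ) : ℕ → S → S → ℝ
  | 0 => fun x y => if x = y then 1 else 0
  | t + 1 => fun x y => ∑ z : S, chainPow P t x z * P z y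

/-- Total variation distance between two distributions on a finite set. -/
noncomputable def tvDist {S : Type*} [Fintype S] (μ ν : S → ℝ) : ℝ :=
  (1 / 2) * ∑ s : S, |μ s - ν s|

/-- Mixing time: the maximum over starting states in `states` of the first time
the distribution is within `1/e` of `π` in total variation. -/
noncomputable def mixTime {S : Type*} [Fintype S] [DecidableEq S]
    (P : S → S → ℝ) (π : S → ℝ) (states : Finset S) : ℕ :=
  states.sup fun x => sInf {t : ℕ | tvDist (chainDist P x t) π ≤ 1 / Real.exp 1}

/-- A finite Markov chain is irreducible if every state can reach every other
state in a positive number of steps. -/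
def ChainIrreducible {S : Type*} [Fintype S] [DecidableEq S] (P : S → S → ℝ) : Prop :=
  ∀ x y : S, ∃ t : ℕ, 0 < t ∧ 0 < chainPow P t x y

/-- A finite Markov chain is aperiodic if, for every state, every common divisor
of its set of positive return times equals `1` (i.e. the gcd of the return times
is `1`). -/
def ChainAperiodic {S : Type*} [Fintype S] [DecidableEq S] (P : S → S → ℝ) : Prop :=
  ∀ x : S, ∀ d : ℕ, (∀ t : ℕ, 0 < t → 0 < chainPow P t x x → d ∣ t) → d = 1

/-! Gluing the given one-step couplings along a path `x = z₀, …, z_r = y` (making the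
neighbouring coordinates conditionally independent given the shared one) gives a coupling of
`P x` and `P y` whose expected `Φ`-distance is, by the triangle inequality, at most
`β ∑ Φ(z_l, z_{l+1}) = β Φ(x, y)`. Running this Markovian coupling from `δ_x ⊗ π` keeps the
second coordinate stationary and multiplies the expected distance by at most `β` per step, so
after `t` steps it is at most `β^t D_max`. Distinct states are at distance at least `D_min`,
hence `P(X_t ≠ Y_t) ≤ β^t D`, and the coupling inequality bounds the variation distance by this
probability. The mixing-time bounds follow from `β^T D ≤ 1/e` and `log β⁻¹ ≥ 1 - β`. -/

structure IsCoupling {α β : Type*} [Fintype α] [Fintype β]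
    (μ : α → ℝ) (ν : β → ℝ) (w : α × β → ℝ) : Prop where
  nonneg : ∀ p, 0 ≤ w p
  sum_snd : ∀ a, ∑ b, w (a, b) = μ a
  sum_fst : ∀ b, ∑ a, w (a, b) = ν b

noncomputable def transportCost {α : Type*} [Fintype α] (Φ : α → α → ℝ) (w : α × α → ℝ) : ℝ :=
  ∑ p, w p * Φ p.1 p.2

section Gluing

variable {α β γ : Type*} [Fintype α] [Fintype β] [Fintype γ]

/-- The law of `(X, Y, Z)` built from couplings `A` of `(X, Y)` and `B` of `(Y, Z)` by making
`X` and `Z` conditionally independent given `Y`; where `ν b = 0` the quotient is `0`. -/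
noncomputable def gluedLaw (ν : β → ℝ) (A : α × β → ℝ) (B : β × γ → ℝ) (a : α) (b : β)
    (c : γ) : ℝ :=
  A (a, b) * B (b, c) / ν b

noncomputable def gluedCoupling (ν : β → ℝ) (A : α × β → ℝ) (B : β × γ → ℝ) : α × γ → ℝ :=
  fun p => ∑ b, gluedLaw ν A B p.1 b p.2

def diagCoupling [DecidableEq α] (μ : α → ℝ) : α × α → ℝ :=
  fun p => if p.1 = p.2 then μ p.1 else 0

namespace IsCoupling

variable {μ : α → ℝ} {ν : β → ℝ} {ρ : γ → ℝ} {w : α × β → ℝ}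

theorem apply_le_left (hw : IsCoupling μ ν w) (a : α) (b : β) : w (a, b) ≤ μ a :=
  hw.sum_snd a ▸ single_le_sum (fun b' _ => hw.nonneg (a, b')) (mem_univ b)

theorem apply_le_right (hw : IsCoupling μ ν w) (a : α) (b : β) : w (a, b) ≤ ν b :=
  hw.sum_fst b ▸ single_le_sum (fun a' _ => hw.nonneg (a', b)) (mem_univ a)

theorem sum_eq_sum_right (hw : IsCoupling μ ν w) : ∑ p, w p = ∑ b, ν b := by
  simp only [Fintype.sum_prod_type_right, hw.sum_fst]

theorem product (hμ0 : ∀ a, 0 ≤ μ a) (hν0 : ∀ b, 0 ≤ ν b) (hμ1 : ∑ a, μ a = 1)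
    (hν1 : ∑ b, ν b = 1) : IsCoupling μ ν (fun p => μ p.1 * ν p.2) where
  nonneg p := mul_nonneg (hμ0 _) (hν0 _)
  sum_snd a := by dsimp only; rw [← mul_sum, hν1, mul_one]
  sum_fst b := by dsimp only; rw [← sum_mul, hμ1, one_mul]

theorem diag [DecidableEq α] (hμ : ∀ a, 0 ≤ μ a) : IsCoupling μ μ (diagCoupling μ) where
  nonneg p := by unfold diagCoupling; split_ifs <;> simp [hμ]
  sum_snd a := by simp [diagCoupling]
  sum_fst b := by simp [diagCoupling]

variable {A : α × β → ℝ} {B : β × γ → ℝ}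

theorem gluedLaw_nonneg (hA : IsCoupling μ ν A) (hB : IsCoupling ν ρ B) (a : α) (b : β)
    (c : γ) : 0 ≤ gluedLaw ν A B a b c :=
  div_nonneg (mul_nonneg (hA.nonneg _) (hB.nonneg _)) ((hA.nonneg _).trans (hA.apply_le_right a b))

theorem sum_gluedLaw_right (hA : IsCoupling μ ν A) (hB : IsCoupling ν ρ B) (a : α) (b : β) :
    ∑ c, gluedLaw ν A B a b c = A (a, b) := by
  simp only [gluedLaw, ← sum_div, ← mul_sum, hB.sum_snd]
  rcases eq_or_ne (ν b) 0 with h | h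
  · have : A (a, b) = 0 := le_antisymm (h ▸ hA.apply_le_right a b) (hA.nonneg _)
    simp [h, this]
  · exact mul_div_cancel_right₀ _ h

theorem sum_gluedLaw_left (hA : IsCoupling μ ν A) (hB : IsCoupling ν ρ B) (b : β) (c : γ) :
    ∑ a, gluedLaw ν A B a b c = B (b, c) := by
  simp only [gluedLaw, ← sum_div, ← sum_mul, hA.sum_fst]
  rcases eq_or_ne (ν b) 0 with h | h
  · have : B (b, c) = 0 := le_antisymm (h ▸ hB.apply_le_left b c) (hB.nonneg _)
    simp [h, this]
  · exact mul_div_cancel_left₀ _ h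

theorem glue (hA : IsCoupling μ ν A) (hB : IsCoupling ν ρ B) :
    IsCoupling μ ρ (gluedCoupling ν A B) where
  nonneg p := sum_nonneg fun b _ => gluedLaw_nonneg hA hB p.1 b p.2
  sum_snd a := by
    simp only [gluedCoupling]
    rw [sum_comm]
    simp only [sum_gluedLaw_right hA hB, hA.sum_snd]
  sum_fst c := by
    simp only [gluedCoupling]
    rw [sum_comm]
    simp only [sum_gluedLaw_left hA hB, hB.sum_fst]

end IsCoupling

end Gluing

section Cost

variable {α : Type*} [Fintype α] {Φ : α → α → ℝ} {μ ν ρ : α → ℝ} {A B : α × α → ℝ}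

theorem transportCost_gluedCoupling_le (htri : ∀ a b c, Φ a c ≤ Φ a b + Φ b c)
    (hA : IsCoupling μ ν A) (hB : IsCoupling ν ρ B) :
    transportCost Φ (gluedCoupling ν A B) ≤ transportCost Φ A + transportCost Φ B := by
  set k := gluedLaw ν A B
  calc transportCost Φ (gluedCoupling ν A B)
      = ∑ a, ∑ b, ∑ c, k a b c * Φ a c := by
        simp only [transportCost, gluedCoupling, Fintype.sum_prod_type, sum_mul]
        exact sum_congr rfl fun a _ => sum_comm
    _ ≤ ∑ a, ∑ b, ∑ c, (k a b c * Φ a b + k a b c * Φ b c) := by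
        gcongr with a _ b _ c _
        rw [← mul_add]
        exact mul_le_mul_of_nonneg_left (htri a b c) (hA.gluedLaw_nonneg hB a b c)
    _ = ∑ a, ∑ b, (∑ c, k a b c) * Φ a b + ∑ b, ∑ c, (∑ a, k a b c) * Φ b c := by
        simp only [sum_add_distrib, sum_mul]
        congr 1
        rw [sum_comm]
        exact sum_congr rfl fun b _ => sum_comm
    _ = transportCost Φ A + transportCost Φ B := by
        simp only [k, hA.sum_gluedLaw_right hB, hA.sum_gluedLaw_left hB, transportCost,
          Fintype.sum_prod_type]

theorem transportCost_diagCoupling [DecidableEq α] (hΦ : ∀ a, Φ a a = 0) (μ : α → ℝ) :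
    transportCost Φ (diagCoupling μ) = 0 :=
  sum_eq_zero fun p _ => by
    unfold diagCoupling
    split_ifs with h
    · rw [h, hΦ, mul_zero]
    · rw [zero_mul]

theorem transportCost_le (hw : IsCoupling μ ν A) {M : ℝ} (hΦ : ∀ a b, Φ a b ≤ M) :
    transportCost Φ A ≤ M * ∑ b, ν b := by
  rw [← hw.sum_eq_sum_right, mul_sum]
  exact sum_le_sum fun p _ => by
    rw [mul_comm M]; exact mul_le_mul_of_nonneg_left (hΦ _ _) (hw.nonneg p)

end Cost

section Path

variable {α : Type*} [Fintype α] [DecidableEq α]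

noncomputable def pathCoupling (μ : ℕ → α → ℝ) (C : ℕ → α × α → ℝ) : ℕ → α × α → ℝ
  | 0 => diagCoupling (μ 0)
  | r + 1 => gluedCoupling (μ r) (pathCoupling μ C r) (C r)

variable {μ : ℕ → α → ℝ} {C : ℕ → α × α → ℝ} {r : ℕ}

theorem IsCoupling.pathCoupling (h0 : ∀ a, 0 ≤ μ 0 a)
    (hC : ∀ l < r, IsCoupling (μ l) (μ (l + 1)) (C l)) :
    IsCoupling (μ 0) (μ r) (pathCoupling μ C r) := by
  induction r with
  | zero => exact IsCoupling.diag h0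
  | succ r ih => exact (ih fun l hl => hC l (by omega)).glue (hC r (by omega))

theorem transportCost_pathCoupling_le {Φ : α → α → ℝ} (hΦ : ∀ a, Φ a a = 0)
    (htri : ∀ a b c, Φ a c ≤ Φ a b + Φ b c) (h0 : ∀ a, 0 ≤ μ 0 a)
    (hC : ∀ l < r, IsCoupling (μ l) (μ (l + 1)) (C l)) :
    transportCost Φ (pathCoupling μ C r) ≤ ∑ l ∈ range r, transportCost Φ (C l) := by
  induction r with
  | zero => simp [pathCoupling, transportCost_diagCoupling hΦ]
  | succ r ih =>
    have hC' : ∀ l < r, IsCoupling (μ l) (μ (l + 1)) (C l) := fun l hl => hC l (by omega)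
    rw [sum_range_succ]
    exact (transportCost_gluedCoupling_le htri (.pathCoupling h0 hC') (hC r (by omega))).trans
      (by gcongr; exact ih hC')

end Path

section Markov

variable {α : Type*} [Fintype α] {P : α → α → ℝ} {Φ : α → α → ℝ} {β : ℝ}

def stepDist (P : α → α → ℝ) (μ : α → ℝ) : α → ℝ :=
  fun s => ∑ s', μ s' * P s' s

variable {Q : α → α → α × α → ℝ} {μ ν : α → ℝ} {w : α × α → ℝ}

theorem IsCoupling.stepDist (hQ : ∀ x y, IsCoupling (P x) (P y) (Q x y))
    (hw : IsCoupling μ ν w) :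
    IsCoupling (stepDist P μ) (stepDist P ν) (stepDist (Function.uncurry Q) w) where
  nonneg p := sum_nonneg fun q _ => mul_nonneg (hw.nonneg q) ((hQ _ _).nonneg p)
  sum_snd a := by
    simp only [_root_.stepDist, Function.uncurry]
    rw [sum_comm]
    simp only [← mul_sum, (hQ _ _).sum_snd, Fintype.sum_prod_type, ← sum_mul, hw.sum_snd]
  sum_fst b := by
    simp only [_root_.stepDist, Function.uncurry]
    rw [sum_comm]
    simp only [← mul_sum, (hQ _ _).sum_fst, Fintype.sum_prod_type_right, ← sum_mul, hw.sum_fst]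

theorem transportCost_stepDist_le (hw : ∀ q, 0 ≤ w q)
    (hQ : ∀ x y, transportCost Φ (Q x y) ≤ β * Φ x y) :
    transportCost Φ (stepDist (Function.uncurry Q) w) ≤ β * transportCost Φ w := by
  calc transportCost Φ (stepDist (Function.uncurry Q) w)
      = ∑ q, w q * transportCost Φ (Q q.1 q.2) := by
        simp only [transportCost, stepDist, Function.uncurry, sum_mul, mul_sum, mul_assoc]
        exact sum_comm
    _ ≤ ∑ q, w q * (β * Φ q.1 q.2) := by gcongr with q; exacts [hw q, hQ _ _]
    _ = β * transportCost Φ w := by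
        simp only [transportCost, mul_sum]
        exact sum_congr rfl fun q _ => by ring

theorem exists_coupling_iterate_stepDist (hQ : ∀ x y, IsCoupling (P x) (P y) (Q x y))
    (hQcost : ∀ x y, transportCost Φ (Q x y) ≤ β * Φ x y) (hβ : 0 ≤ β)
    (hw : IsCoupling μ ν w) (t : ℕ) :
    ∃ w', IsCoupling ((stepDist P)^[t] μ) ((stepDist P)^[t] ν) w' ∧
      transportCost Φ w' ≤ β ^ t * transportCost Φ w := by
  induction t with
  | zero => exact ⟨w, hw, by simp⟩
  | succ t ih =>
    obtain ⟨w', hw', hcost⟩ := ih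
    refine ⟨_, by simpa only [Function.iterate_succ_apply'] using hw'.stepDist hQ, ?_⟩
    calc _ ≤ β * transportCost Φ w' := transportCost_stepDist_le hw'.nonneg hQcost
      _ ≤ β * (β ^ t * transportCost Φ w) := mul_le_mul_of_nonneg_left hcost hβ
      _ = β ^ (t + 1) * transportCost Φ w := by ring

variable [DecidableEq α]

theorem chainDist_eq_iterate_stepDist (x : α) (t : ℕ) :
    chainDist P x t = (stepDist P)^[t] (chainDist P x 0) := by
  induction t with
  | zero => rfl
  | succ t ih => rw [Function.iterate_succ_apply', ← ih]; rfl

theorem exists_coupling_transportCost_le_of_path {K : α → α → α × α → ℝ} {S : Set (α × α)}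
    (hP0 : ∀ x y, 0 ≤ P x y) (hK : ∀ p ∈ S, IsCoupling (P p.1) (P p.2) (K p.1 p.2))
    (hΦ : ∀ a, Φ a a = 0) (htri : ∀ a b c, Φ a c ≤ Φ a b + Φ b c)
    (hcontr : ∀ p ∈ S, transportCost Φ (K p.1 p.2) ≤ β * Φ p.1 p.2) {x y : α}
    (hpath : ∃ (r : ℕ) (z : ℕ → α), z 0 = x ∧ z r = y ∧ (∀ l < r, (z l, z (l + 1)) ∈ S) ∧
      Φ x y = ∑ l ∈ range r, Φ (z l) (z (l + 1))) :
    ∃ w, IsCoupling (P x) (P y) w ∧ transportCost Φ w ≤ β * Φ x y := by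
  obtain ⟨r, z, rfl, rfl, hzS, hΦz⟩ := hpath
  have hC : ∀ l < r, IsCoupling (P (z l)) (P (z (l + 1))) (K (z l) (z (l + 1))) :=
    fun l hl => hK _ (hzS l hl)
  refine ⟨pathCoupling (fun l => P (z l)) (fun l => K (z l) (z (l + 1))) r,
    .pathCoupling (hP0 _) hC, ?_⟩
  calc _ ≤ ∑ l ∈ range r, transportCost Φ (K (z l) (z (l + 1))) :=
        transportCost_pathCoupling_le hΦ htri (hP0 _) hC
    _ ≤ ∑ l ∈ range r, β * Φ (z l) (z (l + 1)) :=
        sum_le_sum fun l hl => hcontr _ (hzS l (mem_range.1 hl))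
    _ = β * Φ (z 0) (z r) := by rw [← mul_sum, hΦz]

end Markov

section TotalVariation

variable {α : Type*} [Fintype α] [DecidableEq α] {μ ν : α → ℝ} {w : α × α → ℝ}

theorem IsCoupling.tvDist_le (hw : IsCoupling μ ν w) :
    tvDist μ ν ≤ ∑ p with p.1 ≠ p.2, w p := by
  set f : α × α → ℝ := fun p => if p.1 ≠ p.2 then w p else 0
  have hf : ∀ a b, |w (a, b) - w (b, a)| ≤ f (a, b) + f (b, a) := fun a b => by
    rcases eq_or_ne a b with rfl | h
    · simp [f]
    · simpa [f, h, h.symm, abs_of_nonneg (hw.nonneg _)] using abs_sub (w (a, b)) (w (b, a))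
  have hdiff : ∀ a, |μ a - ν a| ≤ ∑ b, (f (a, b) + f (b, a)) := fun a => by
    rw [← hw.sum_snd, ← hw.sum_fst, ← sum_sub_distrib]
    exact (abs_sum_le_sum_abs _ _).trans (sum_le_sum fun b _ => hf a b)
  have hsum : ∑ a, ∑ b, (f (a, b) + f (b, a)) = 2 * ∑ p with p.1 ≠ p.2, w p := by
    rw [sum_filter]
    change _ = 2 * ∑ p, f p
    simp only [Fintype.sum_prod_type, sum_add_distrib]
    rw [sum_comm (f := fun a b => f (b, a))]
    ring
  unfold tvDist
  linarith [sum_le_sum fun a (_ : a ∈ univ) => hdiff a]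

theorem mul_sum_offDiag_le_transportCost {Φ : α → α → ℝ} {m : ℝ} (hw : ∀ p, 0 ≤ w p)
    (hΦ0 : ∀ a b, 0 ≤ Φ a b) (hm : ∀ a b, a ≠ b → m ≤ Φ a b) :
    m * ∑ p with p.1 ≠ p.2, w p ≤ transportCost Φ w := by
  rw [mul_sum]
  calc _ ≤ ∑ p with p.1 ≠ p.2, w p * Φ p.1 p.2 := sum_le_sum fun p hp => by
        rw [mul_comm]
        exact mul_le_mul_of_nonneg_left (hm _ _ (mem_filter.1 hp).2) (hw p)
    _ ≤ transportCost Φ w := sum_le_sum_of_subset_of_nonneg (filter_subset _ _)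
        fun p _ _ => mul_nonneg (hw p) (hΦ0 _ _)

end TotalVariation

theorem tvDist_chainDist_le {α : Type*} [Fintype α] [DecidableEq α] {P : α → α → ℝ}
    {Q : α → α → α × α → ℝ} {Φ : α → α → ℝ} {π : α → ℝ} {β m M : ℝ}
    (hQ : ∀ x y, IsCoupling (P x) (P y) (Q x y))
    (hQcost : ∀ x y, transportCost Φ (Q x y) ≤ β * Φ x y) (hβ : 0 ≤ β)
    (hπ0 : ∀ x, 0 ≤ π x) (hπ1 : ∑ x, π x = 1) (hπstat : stepDist P π = π)
    (hΦ0 : ∀ a b, 0 ≤ Φ a b) (hm : 0 < m) (hmΦ : ∀ a b, a ≠ b → m ≤ Φ a b)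
    (hΦM : ∀ a b, Φ a b ≤ M) (x : α) (t : ℕ) :
    tvDist (chainDist P x t) π ≤ min 1 (β ^ t * (M / m)) := by
  have hw₀ : IsCoupling (chainDist P x 0) π (fun p => chainDist P x 0 p.1 * π p.2) :=
    .product (fun a => by simp only [chainDist]; positivity) hπ0 (by simp [chainDist]) hπ1
  obtain ⟨w, hw, hcost⟩ := exists_coupling_iterate_stepDist hQ hQcost hβ hw₀ t
  rw [Function.iterate_fixed hπstat, ← chainDist_eq_iterate_stepDist] at hw
  have hoff : ∑ p with p.1 ≠ p.2, w p ≤ ∑ p, w p :=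
    sum_le_sum_of_subset_of_nonneg (filter_subset _ _) fun p _ _ => hw.nonneg p
  refine le_min ?_ ?_
  · exact hw.tvDist_le.trans (hoff.trans (hw.sum_eq_sum_right.trans hπ1).le)
  · rw [mul_div_assoc', le_div_iff₀ hm, mul_comm]
    calc m * tvDist (chainDist P x t) π
        ≤ m * ∑ p with p.1 ≠ p.2, w p := mul_le_mul_of_nonneg_left hw.tvDist_le hm.le
      _ ≤ transportCost Φ w := mul_sum_offDiag_le_transportCost hw.nonneg hΦ0 hmΦ
      _ ≤ β ^ t * transportCost Φ _ := hcost
      _ ≤ β ^ t * M := by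
          gcongr
          simpa [hπ1] using transportCost_le hw₀ hΦM

theorem mixTime_le_of_forall {α : Type*} [Fintype α] [DecidableEq α] {P : α → α → ℝ}
    {π : α → ℝ} {s : Finset α} {T : ℕ} (h : ∀ x ∈ s, tvDist (chainDist P x T) π ≤ 1 / Real.exp 1) :
    mixTime P π s ≤ T :=
  Finset.sup_le fun x hx => Nat.sInf_le (h x hx)

theorem pow_ceil_log_div_log_inv_mul_le {β D : ℝ} (hβ0 : 0 < β) (hβ1 : β < 1) (hD : 0 < D) :
    β ^ ⌈Real.log (D * Real.exp 1) / Real.log β⁻¹⌉₊ * D ≤ 1 / Real.exp 1 := by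
  set T := ⌈Real.log (D * Real.exp 1) / Real.log β⁻¹⌉₊
  have hlog : 0 < Real.log β⁻¹ := Real.log_pos (one_lt_inv_iff₀.2 ⟨hβ0, hβ1⟩)
  have hT : Real.log (D * Real.exp 1) ≤ Real.log (β⁻¹ ^ T) := by
    rw [Real.log_pow, ← div_le_iff₀ hlog]
    exact Nat.le_ceil _
  have hDe : D * Real.exp 1 ≤ β⁻¹ ^ T := (Real.log_le_log_iff (by positivity) (by positivity)).1 hT
  calc β ^ T * D = D / β⁻¹ ^ T := by rw [inv_pow, div_inv_eq_mul, mul_comm]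
    _ ≤ D / (D * Real.exp 1) := div_le_div_of_nonneg_left hD.le (by positivity) hDe
    _ = 1 / Real.exp 1 := by field_simp

theorem ceil_div_log_inv_le_ceil_div_one_sub {β L : ℝ} (hβ0 : 0 < β) (hβ1 : β < 1)
    (hL : 0 ≤ L) : ⌈L / Real.log β⁻¹⌉₊ ≤ ⌈L / (1 - β)⌉₊ := by
  have h := Real.one_sub_inv_le_log_of_pos (inv_pos.2 hβ0)
  rw [inv_inv] at h
  exact Nat.ceil_le_ceil (div_le_div_of_nonneg_left hL (sub_pos.2 hβ1) h)

theorem path_coupling_mixing_time_general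
    {Ω : Type*} [Fintype Ω] [DecidableEq Ω]
    (P : Ω → Ω → ℝ)
    (hP0 : ∀ x y, 0 ≤ P x y)
    (π : Ω → ℝ) (hπ0 : ∀ x, 0 ≤ π x) (hπ1 : ∑ x, π x = 1)
    (hπstat : ∀ y, ∑ x, π x * P x y = π y)
    (Φ : Ω → Ω → ℝ)
    (hΦ0 : ∀ x y, 0 ≤ Φ x y) (hΦeq : ∀ x y, Φ x y = 0 ↔ x = y)
    (hΦtri : ∀ x y z, Φ x z ≤ Φ x y + Φ y z)
    (Dmin Dmax D : ℝ)
    (hDminle : ∀ x y : Ω, x ≠ y → Dmin ≤ Φ x y)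
    (hDminmem : ∃ x y : Ω, x ≠ y ∧ Φ x y = Dmin)
    (hDmaxle : ∀ x y : Ω, Φ x y ≤ Dmax)
    (hD : D = Dmax / Dmin)
    -- the set of pairs on which the contraction condition is assumed
    (S : Set (Ω × Ω))
    -- every pair of states is joined by a path of pairs in `S` on which `Φ` is additive
    (hpath : ∀ x y : Ω, ∃ (r : ℕ) (z : ℕ → Ω), z 0 = x ∧ z r = y ∧
      (∀ l < r, (z l, z (l + 1)) ∈ S) ∧
      Φ x y = ∑ l ∈ Finset.range r, Φ (z l) (z (l + 1)))
    -- `K x y` is the joint law of one coupled step of the chain from `(x,y)`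
    (K : Ω → Ω → Ω × Ω → ℝ)
    (hK0 : ∀ x y p, 0 ≤ K x y p)
    (hKmarg1 : ∀ x y x', ∑ y' : Ω, K x y (x', y') = P x x')
    (hKmarg2 : ∀ x y y', ∑ x' : Ω, K x y (x', y') = P y y')
    (β : ℝ) (hβ0 : 0 < β) (hβ1 : β < 1)
    (hcontr : ∀ p ∈ S, ∑ p' : Ω × Ω, K p.1 p.2 p' * Φ p'.1 p'.2 ≤ β * Φ p.1 p.2) :
    (∀ x : Ω, ∀ t : ℕ, tvDist (chainDist P x t) π ≤ min 1 (β ^ t * D)) ∧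
    mixTime P π Finset.univ ≤ ⌈Real.log (D * Real.exp 1) / Real.log β⁻¹⌉₊ ∧
    ⌈Real.log (D * Real.exp 1) / Real.log β⁻¹⌉₊ ≤
      ⌈Real.log (D * Real.exp 1) / (1 - β)⌉₊ := by
  obtain ⟨x₀, y₀, hne, rfl⟩ := hDminmem
  have hDmin : 0 < Φ x₀ y₀ := (hΦ0 x₀ y₀).lt_of_ne fun h => hne ((hΦeq _ _).1 h.symm)
  have hD1 : 1 ≤ D := hD ▸ (one_le_div hDmin).2 (hDmaxle x₀ y₀)
  choose Q hQ hQcost using fun x y =>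
    exists_coupling_transportCost_le_of_path hP0
      (fun p _ => ⟨hK0 p.1 p.2, hKmarg1 _ _, hKmarg2 _ _⟩) (fun a => (hΦeq a a).2 rfl) hΦtri
      hcontr (hpath x y)
  have htv : ∀ x t, tvDist (chainDist P x t) π ≤ min 1 (β ^ t * D) := fun x t =>
    hD ▸ tvDist_chainDist_le hQ hQcost hβ0.le hπ0 hπ1 (funext hπstat) hΦ0 hDmin hDminle hDmaxle x t
  refine ⟨htv, mixTime_le_of_forall fun x _ => ?_, ceil_div_log_inv_le_ceil_div_one_sub hβ0 hβ1 ?_⟩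
  · exact ((htv x _).trans (min_le_right _ _)).trans
      (pow_ceil_log_div_log_inv_mul_le hβ0 hβ1 (by linarith))
  · exact Real.log_nonneg (one_le_mul_of_one_le_of_one_le hD1 (Real.one_le_exp zero_le_one))

/-- path coupling, Theorem 4 of the paper: if every pair of
states is joined by a path of pairs in `S` along which `Φ` is additive, and a
coupling `K` of the chain contracts `Φ` by a factor `β < 1` on every pair in `S`,
then `‖μ_t - π‖_var ≤ min{1, β^t D}` and
`T_mix ≤ ⌈log(De)/log(β⁻¹)⌉ ≤ ⌈log(De)/(1-β)⌉`. -/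
theorem path_coupling_mixing_time
    {Ω : Type*} [Fintype Ω] [DecidableEq Ω] [Nonempty Ω]
    (P : Ω → Ω → ℝ)
    (hP0 : ∀ x y, 0 ≤ P x y) (hP1 : ∀ x, ∑ y, P x y = 1)
    (hirr : ChainIrreducible P) (haper : ChainAperiodic P)
    (π : Ω → ℝ) (hπ0 : ∀ x, 0 ≤ π x) (hπ1 : ∑ x, π x = 1)
    (hπstat : ∀ y, ∑ x, π x * P x y = π y)
    (Φ : Ω → Ω → ℝ)
    (hΦ0 : ∀ x y, 0 ≤ Φ x y) (hΦeq : ∀ x y, Φ x y = 0 ↔ x = y)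
    (hΦsymm : ∀ x y, Φ x y = Φ y x)
    (hΦtri : ∀ x y z, Φ x z ≤ Φ x y + Φ y z)
    (Dmin Dmax D : ℝ)
    (hDminle : ∀ x y : Ω, x ≠ y → Dmin ≤ Φ x y)
    (hDminmem : ∃ x y : Ω, x ≠ y ∧ Φ x y = Dmin)
    (hDmaxle : ∀ x y : Ω, Φ x y ≤ Dmax)
    (hDmaxmem : ∃ x y : Ω, Φ x y = Dmax)
    (hD : D = Dmax / Dmin)
    -- the set of pairs on which the contraction condition is assumed
    (S : Set (Ω × Ω))
    -- every pair of states is joined by a path of pairs in `S` on which `Φ` is additive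
    (hpath : ∀ x y : Ω, ∃ (r : ℕ) (z : ℕ → Ω), z 0 = x ∧ z r = y ∧
      (∀ l < r, (z l, z (l + 1)) ∈ S) ∧
      Φ x y = ∑ l ∈ Finset.range r, Φ (z l) (z (l + 1)))
    -- `K x y` is the joint law of one coupled step of the chain from `(x,y)`
    (K : Ω → Ω → Ω × Ω → ℝ)
    (hK0 : ∀ x y p, 0 ≤ K x y p)
    (hKmarg1 : ∀ x y x', ∑ y' : Ω, K x y (x', y') = P x x')
    (hKmarg2 : ∀ x y y', ∑ x' : Ω, K x y (x', y') = P y y')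
    (hKdiag : ∀ x : Ω, ∀ p : Ω × Ω, p.1 ≠ p.2 → K x x p = 0)
    (β : ℝ) (hβ0 : 0 < β) (hβ1 : β < 1)
    (hcontr : ∀ p ∈ S, ∑ p' : Ω × Ω, K p.1 p.2 p' * Φ p'.1 p'.2 ≤ β * Φ p.1 p.2) :
    (∀ x : Ω, ∀ t : ℕ, tvDist (chainDist P x t) π ≤ min 1 (β ^ t * D)) ∧
    mixTime P π Finset.univ ≤ ⌈Real.log (D * Real.exp 1) / Real.log β⁻¹⌉₊ ∧
    ⌈Real.log (D * Real.exp 1) / Real.log β⁻¹⌉₊ ≤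
      ⌈Real.log (D * Real.exp 1) / (1 - β)⌉₊ :=
  path_coupling_mixing_time_general P hP0 π hπ0 hπ1 hπstat Φ hΦ0 hΦeq hΦtri Dmin Dmax D hDminle
    hDminmem hDmaxle hD S hpath K hK0 hKmarg1 hKmarg2 β hβ0 hβ1 hcontr
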